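/- Fix an integer l ≥ 1. For large real x, ∑_{1 ≤ m ≤ √x} m^l·(x/(2m) − m/2 − l/2)^l = ((l!)²·2^l/(2l+1)!)·x^{l+1/2} − ((l+1)/2^{l+1})·x^l + O(x^{l−1/2}), with implied constant depending only on l. -/

import Mathlib

/-!
Write `u(t) = (x - t² - l t)^l` (this is `quadraticPow l x`) and `N = ⌊√x⌋`; the summand is
`u(m) / 2^l`. The trapezoidal rule replaces `∑_{m=1}^N u(m)` by `∫_0^N u + (u(N) - u(0))/2` with
error `O(N · sup |u''|) = O(x^(l-1/2))`, since `|u''| = O(x^(l-1))` on `[0, √x]`. There, by the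
second-order binomial expansion in `l t`, `u(t) = (x - t²)^l - l² t (x - t²)^(l-1) + O(x^(l-1))`.
Over `[0, √x]` the first term integrates to `4^l (l!)² / (2l+1)! · x^(l+1/2)` (Wallis' integral
after `t = √x cos θ`); over `[0, N]` the second integrates to `(l/2) (x^l - (x - N²)^l)`, which
together with `u(0)/2 = x^l/2` gives the `x^l` term. What remains (the integral over `[N, √x]` and
the values at `N`) is `O(x^(l/2))`, because `0 ≤ x - t² ≤ 2√x` for `N ≤ t ≤ √x`.
-/

open Real Finset intervalIntegral
open scoped Nat

theorem integral_sin_pow_odd_zero_pi_div_two (n : ℕ) :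
    ∫ θ in (0 : ℝ)..π / 2, sin θ ^ (2 * n + 1) = 4 ^ n * (n ! : ℝ) ^ 2 / (2 * n + 1)! := by
  induction n with
  | zero => simp
  | succ n ih =>
    rw [show 2 * (n + 1) + 1 = 2 * n + 1 + 2 by ring, integral_sin_pow, ih,
      show 2 * n + 1 + 2 = 2 * n + 1 + 1 + 1 by ring]
    simp only [sin_zero, cos_pi_div_two, sin_pi_div_two, mul_zero, sub_zero, Nat.factorial_succ]
    push_cast
    field_simp
    ring

theorem integral_one_sub_sq_pow (n : ℕ) :
    ∫ s in (0 : ℝ)..1, (1 - s ^ 2) ^ n = 4 ^ n * (n ! : ℝ) ^ 2 / (2 * n + 1)! := by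
  have hsub := integral_comp_mul_deriv (a := π / 2) (b := 0) (f := cos) (f' := fun θ => -sin θ)
    (g := fun s => (1 - s ^ 2) ^ n) (fun θ _ => hasDerivAt_cos θ) (by fun_prop) (by fun_prop)
  rw [cos_pi_div_two, cos_zero] at hsub
  rw [← hsub, ← integral_sin_pow_odd_zero_pi_div_two, integral_symm, ← integral_neg]
  refine integral_congr fun θ _ => ?_
  rw [Function.comp_apply, ← sin_sq, ← pow_mul]
  ring

theorem integral_sub_sq_pow {x : ℝ} (hx : 0 < x) (n : ℕ) :
    ∫ t in (0 : ℝ)..√x, (x - t ^ 2) ^ n =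
      4 ^ n * (n ! : ℝ) ^ 2 / (2 * n + 1)! * x ^ (n + 1 / 2 : ℝ) := by
  have hscale (s : ℝ) : (x - (√x * s) ^ 2) ^ n = x ^ n * (1 - s ^ 2) ^ n := by
    rw [mul_pow, sq_sqrt hx.le, ← mul_pow]
    ring
  have h := integral_comp_mul_left (fun t => (x - t ^ 2) ^ n) (c := √x) (a := 0) (b := 1)
    (by positivity)
  simp only [hscale, integral_const_mul, integral_one_sub_sq_pow, mul_zero, mul_one,
    smul_eq_mul] at h
  rw [← eq_inv_mul_iff_mul_eq₀ (by positivity)] at h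
  rw [h, rpow_add hx, rpow_natCast, ← sqrt_eq_rpow]
  field_simp

theorem integral_mul_sub_sq_pow (x b : ℝ) (n : ℕ) :
    ∫ t in (0 : ℝ)..b, t * (x - t ^ 2) ^ n =
      (x ^ (n + 1) - (x - b ^ 2) ^ (n + 1)) / (2 * (n + 1)) := by
  rw [integral_eq_sub_of_hasDerivAt (f := fun t => -(x - t ^ 2) ^ (n + 1) / (2 * (n + 1)))
    (fun t _ => ?_) (by apply Continuous.intervalIntegrable; fun_prop)]
  · ring
  · have hq : HasDerivAt (fun t => x - t ^ 2) (-(2 * t)) t := by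
      simpa using (hasDerivAt_pow 2 t).const_sub x
    refine ((hq.pow (n + 1)).neg.div_const (2 * (n + 1 : ℝ))).congr_deriv ?_
    rw [Nat.add_sub_cancel]
    field_simp
    push_cast
    ring

theorem sum_Icc_sub_integral_eq_trapezoidal_error (f : ℝ → ℝ) {N : ℕ} (hN : 0 < N) :
    ∑ m ∈ Icc 1 N, f m - ((∫ t in (0 : ℝ)..N, f t) + (f N - f 0) / 2) =
      trapezoidal_error f N 0 N := by
  obtain ⟨n, rfl⟩ := Nat.exists_eq_add_one_of_ne_zero hN.ne'
  have hN0 : ((n + 1 : ℕ) : ℝ) ≠ 0 := by positivity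
  rw [trapezoidal_error, trapezoidal_integral, sub_zero, div_self hN0, one_mul,
    ← Ico_add_one_right_eq_Icc, sum_Ico_eq_sum_range, Nat.add_sub_cancel, Nat.add_sub_cancel,
    sum_range_succ]
  simp only [zero_add, mul_div_assoc, div_self hN0, mul_one]
  push_cast
  ring_nf

theorem abs_trapezoidal_error_le_of_contDiff {f : ℝ → ℝ} (hf : ContDiff ℝ 2 f) {a b ζ : ℝ}
    (hab : a < b) (hζ : ∀ t ∈ Set.Icc a b, |iteratedDeriv 2 f t| ≤ ζ) {N : ℕ} (hN : 0 < N) :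
    |trapezoidal_error f N a b| ≤ (b - a) ^ 3 * ζ / (12 * N ^ 2) := by
  have hba : |b - a| = b - a := abs_of_pos (sub_pos.mpr hab)
  refine hba ▸ trapezoidal_error_le_of_c2 hf.contDiffOn (fun t => ?_) hN
  rw [Set.uIcc_of_lt hab]
  by_cases ht : t ∈ Set.Icc a b
  · rw [iteratedDerivWithin_eq_iteratedDeriv (uniqueDiffOn_Icc hab) hf.contDiffAt ht]
    exact hζ t ht
  · rw [iteratedDerivWithin_succ, derivWithin_zero_of_notMem_closure
      (by rwa [isClosed_Icc.closure_eq]), abs_zero]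
    exact (abs_nonneg _).trans (hζ a ⟨le_rfl, hab.le⟩)

theorem abs_pow_sub_pow_sub_mul_le {a b M D : ℝ} (ha : |a| ≤ M) (hb : |b| ≤ M) (hD : 0 ≤ D)
    (hab : (a - b) ^ 2 ≤ D * M) (n : ℕ) :
    |a ^ n - b ^ n - n * (a - b) * b ^ (n - 1)| ≤ n ^ 2 * D * M ^ (n - 1) := by
  have hM : 0 ≤ M := (abs_nonneg a).trans ha
  have key (k : ℕ) :
      |a ^ (k + 1) - b ^ (k + 1) - (k + 1) * (a - b) * b ^ k| ≤ k ^ 2 * D * M ^ k := by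
    induction k with
    | zero => simp
    | succ k ih =>
      have hrec : a ^ (k + 1 + 1) - b ^ (k + 1 + 1) - (k + 1 + 1) * (a - b) * b ^ (k + 1) =
          a * (a ^ (k + 1) - b ^ (k + 1) - (k + 1) * (a - b) * b ^ k) +
            (k + 1) * (a - b) ^ 2 * b ^ k := by
        ring
      have hbk : |b ^ k| ≤ M ^ k := by rw [abs_pow]; gcongr
      push_cast
      calc _ = |a * (a ^ (k + 1) - b ^ (k + 1) - (k + 1) * (a - b) * b ^ k) +
            (k + 1) * (a - b) ^ 2 * b ^ k| := by rw [hrec]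
        _ ≤ |a| * |a ^ (k + 1) - b ^ (k + 1) - (k + 1) * (a - b) * b ^ k| +
            (k + 1) * (a - b) ^ 2 * |b ^ k| := by
          refine (abs_add_le _ _).trans_eq ?_
          rw [abs_mul a, abs_mul, abs_mul, abs_of_nonneg (sq_nonneg (a - b)),
            abs_of_nonneg (by positivity : (0 : ℝ) ≤ k + 1)]
        _ ≤ M * (k ^ 2 * D * M ^ k) + (k + 1) * (D * M) * M ^ k := by gcongr
        _ ≤ (k + 1) ^ 2 * D * M ^ (k + 1) := by
          have : 0 ≤ D * M ^ (k + 1) := by positivity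
          rw [pow_succ M k] at *
          nlinarith
  obtain _ | n := n
  · simp
  refine (key n).trans_eq' (by push_cast; ring_nf) |>.trans ?_
  push_cast
  gcongr
  linarith

section
variable {x t : ℝ}

theorem hasDerivAt_sub_sq_sub_mul (c : ℝ) :
    HasDerivAt (fun t => x - t ^ 2 - c * t) (-(2 * t + c)) t := by
  refine (((hasDerivAt_pow 2 t).const_sub x).sub ((hasDerivAt_id t).const_mul c)).congr_deriv ?_
  norm_num
  ring

theorem abs_sub_sq_sub_mul_le (hx : 1 ≤ x) (ht0 : 0 ≤ t) (ht : t ≤ √x) {c : ℝ} (hc : 0 ≤ c) :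
    |x - t ^ 2 - c * t| ≤ (1 + c) * x := by
  have hsx : √x ≤ x := sqrt_le_self_iff.mpr (Or.inr hx)
  have ht2 : t ^ 2 ≤ x := (le_sqrt ht0 (by linarith)).mp ht
  rw [abs_le]
  constructor <;> nlinarith [mul_le_mul_of_nonneg_left (ht.trans hsx) hc]

theorem abs_sub_sq_sub_mul_pow_le (hx : 1 ≤ x) (ht0 : 0 ≤ t) (ht : t ≤ √x) (ht1 : √x ≤ t + 1)
    {c : ℝ} (hc : 0 ≤ c) {l : ℕ} (hl : 1 ≤ l) :
    |(x - t ^ 2 - c * t) ^ l| ≤ (2 + c) ^ l * (x ^ (l - 1) * √x) := by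
  have hs : √x ^ 2 = x := sq_sqrt (by linarith)
  have hs1 : 1 ≤ √x := one_le_sqrt.mpr hx
  have hbase : |x - t ^ 2 - c * t| ≤ (2 + c) * √x := by
    rw [abs_le]
    constructor <;> nlinarith [mul_le_mul_of_nonneg_left ht hc, mul_nonneg hc ht0]
  have hsl : √x ^ l ≤ x ^ (l - 1) * √x := by
    rw [← pow_sub_one_mul (by omega) (√x)]
    gcongr
    exact sqrt_le_self_iff.mpr (Or.inr hx)
  calc |(x - t ^ 2 - c * t) ^ l| = |x - t ^ 2 - c * t| ^ l := abs_pow _ _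
    _ ≤ ((2 + c) * √x) ^ l := by gcongr
    _ = (2 + c) ^ l * √x ^ l := mul_pow _ _ _
    _ ≤ _ := by gcongr

end

noncomputable def quadraticPow (l : ℕ) (x t : ℝ) : ℝ := (x - t ^ 2 - l * t) ^ l

section
variable (l : ℕ) {x t : ℝ}

theorem contDiff_quadraticPow : ContDiff ℝ 2 (quadraticPow l x) := by
  unfold quadraticPow
  fun_prop

theorem hasDerivAt_quadraticPow :
    HasDerivAt (quadraticPow l x) (-(l * (x - t ^ 2 - l * t) ^ (l - 1) * (2 * t + l))) t :=
  ((hasDerivAt_sub_sq_sub_mul l).pow l).congr_deriv (by ring)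

theorem iteratedDeriv_two_quadraticPow :
    iteratedDeriv 2 (quadraticPow l x) t =
      l * (l - 1 : ℕ) * (x - t ^ 2 - l * t) ^ (l - 1 - 1) * (2 * t + l) ^ 2 -
        2 * l * (x - t ^ 2 - l * t) ^ (l - 1) := by
  have hq : HasDerivAt (fun t : ℝ => 2 * t + l) 2 t := by
    simpa using ((hasDerivAt_id t).const_mul (2 : ℝ)).add_const (l : ℝ)
  rw [iteratedDeriv_succ, iteratedDeriv_one,
    funext fun s => (hasDerivAt_quadraticPow l (x := x) (t := s)).deriv]
  refine ((((hasDerivAt_sub_sq_sub_mul l).pow (l - 1)).const_mul (l : ℝ)).mul hq).neg.deriv.trans ?_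
  simp only [Pi.pow_apply]
  ring

theorem abs_iteratedDeriv_two_quadraticPow_le (hx : 1 ≤ x) (ht0 : 0 ≤ t) (ht : t ≤ √x) :
    |iteratedDeriv 2 (quadraticPow l x) t| ≤
      (l * (l - 1 : ℕ) * (2 + l) ^ 2 + 2 * l) * ((1 + l) * x) ^ (l - 1) := by
  set M := (1 + l) * x
  have hM : |x - t ^ 2 - l * t| ≤ M := abs_sub_sq_sub_mul_le hx ht0 ht l.cast_nonneg
  have hq : (2 * t + l) ^ 2 ≤ (2 + l) ^ 2 * M := by
    have h1 : 1 ≤ √x := one_le_sqrt.mpr hx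
    have h2 : 2 * t + l ≤ (2 + l) * √x := by nlinarith [l.cast_nonneg (α := ℝ)]
    calc (2 * t + l) ^ 2 ≤ ((2 + l) * √x) ^ 2 := by gcongr
      _ = (2 + l) ^ 2 * x := by rw [mul_pow, sq_sqrt (by linarith)]
      _ ≤ (2 + l) ^ 2 * M := by gcongr; nlinarith [l.cast_nonneg (α := ℝ)]
  -- truncated subtraction breaks the power identity at `l = 1`, where the factor `l - 1` is zero
  have hpow : ((l - 1 : ℕ) : ℝ) * (M ^ (l - 1 - 1) * M) = (l - 1 : ℕ) * M ^ (l - 1) := by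
    rcases eq_or_ne (l - 1) 0 with h | h
    · simp [h]
    · rw [pow_sub_one_mul h]
  rw [iteratedDeriv_two_quadraticPow]
  calc _ ≤ l * (l - 1 : ℕ) * |x - t ^ 2 - l * t| ^ (l - 1 - 1) * (2 * t + l) ^ 2 +
        2 * l * |x - t ^ 2 - l * t| ^ (l - 1) := by
        refine (abs_sub _ _).trans_eq ?_
        simp only [abs_mul, abs_pow, Nat.abs_cast, abs_two, sq_abs]
    _ ≤ l * (l - 1 : ℕ) * M ^ (l - 1 - 1) * ((2 + l) ^ 2 * M) + 2 * l * M ^ (l - 1) := by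
        gcongr
    _ = _ := by linear_combination (l : ℝ) * (2 + l) ^ 2 * hpow

theorem abs_quadraticPow_sub_le (hx : 1 ≤ x) (ht0 : 0 ≤ t) (ht : t ≤ √x) :
    |quadraticPow l x t - ((x - t ^ 2) ^ l - l ^ 2 * (t * (x - t ^ 2) ^ (l - 1)))| ≤
      l ^ 4 * ((1 + l) * x) ^ (l - 1) := by
  have ht2 : t ^ 2 ≤ x := (le_sqrt ht0 (by linarith)).mp ht
  have ha := abs_sub_sq_sub_mul_le hx ht0 ht l.cast_nonneg
  have hb : |x - t ^ 2| ≤ (1 + l) * x := by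
    rw [abs_le]
    constructor <;> nlinarith [l.cast_nonneg (α := ℝ)]
  have hab : (x - t ^ 2 - l * t - (x - t ^ 2)) ^ 2 ≤ l ^ 2 * ((1 + l) * x) := by
    calc _ = (l : ℝ) ^ 2 * t ^ 2 := by ring
      _ ≤ _ := by gcongr; nlinarith [l.cast_nonneg (α := ℝ)]
  calc _ = |(x - t ^ 2 - l * t) ^ l - (x - t ^ 2) ^ l -
        l * (x - t ^ 2 - l * t - (x - t ^ 2)) * (x - t ^ 2) ^ (l - 1)| := by
        rw [quadraticPow]
        congr 1
        ring
    _ ≤ _ := (abs_pow_sub_pow_sub_mul_le ha hb (sq_nonneg _) hab l).trans_eq (by ring)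

theorem integral_quadraticPow_eq (hl : 1 ≤ l) (hx : 0 < x) (b : ℝ) :
    ∫ t in (0 : ℝ)..b, quadraticPow l x t =
      4 ^ l * (l ! : ℝ) ^ 2 / (2 * l + 1)! * x ^ (l + 1 / 2 : ℝ) - l / 2 * x ^ l +
        ((∫ t in (0 : ℝ)..b,
            quadraticPow l x t - ((x - t ^ 2) ^ l - l ^ 2 * (t * (x - t ^ 2) ^ (l - 1)))) -
          (∫ t in b..√x, (x - t ^ 2) ^ l) + l / 2 * (x - b ^ 2) ^ l) := by
  have hint (a c : ℝ) :
      IntervalIntegrable (fun t => (x - t ^ 2) ^ l) MeasureTheory.volume a c := by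
    apply Continuous.intervalIntegrable
    fun_prop
  have hint' :
      IntervalIntegrable (fun t => t * (x - t ^ 2) ^ (l - 1)) MeasureTheory.volume 0 b := by
    apply Continuous.intervalIntegrable
    fun_prop
  have hu : IntervalIntegrable (quadraticPow l x) MeasureTheory.volume 0 b := by
    apply Continuous.intervalIntegrable
    unfold quadraticPow
    fun_prop
  have hmul := integral_mul_sub_sq_pow x b (l - 1)
  rw [Nat.sub_add_cancel hl, Nat.cast_sub hl, Nat.cast_one, sub_add_cancel] at hmul
  rw [integral_sub hu ((hint 0 b).sub (hint'.const_mul _)),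
    integral_sub (hint 0 b) (hint'.const_mul _), integral_const_mul, hmul,
    ← integral_sub_sq_pow hx, ← integral_add_adjacent_intervals (hint 0 b) (hint b √x)]
  field_simp
  ring

end

theorem abs_sum_quadraticPow_sub_trapezoid_le (l : ℕ) {x : ℝ} (hx : 1 ≤ x) {N : ℕ} (hN : 0 < N)
    (hNx : N ≤ √x) :
    |∑ m ∈ Icc 1 N, quadraticPow l x m -
        ((∫ t in (0 : ℝ)..N, quadraticPow l x t) + (quadraticPow l x N - quadraticPow l x 0) / 2)|
      ≤ (l * (l - 1 : ℕ) * (2 + l) ^ 2 + 2 * l) * (1 + l) ^ (l - 1) / 12 * (x ^ (l - 1) * √x) := by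
  rw [sum_Icc_sub_integral_eq_trapezoidal_error _ hN]
  refine (abs_trapezoidal_error_le_of_contDiff (contDiff_quadraticPow l) (Nat.cast_pos.mpr hN)
    (fun t ht => abs_iteratedDeriv_two_quadraticPow_le l hx ht.1 (ht.2.trans hNx)) hN).trans ?_
  have hN0 : (N : ℝ) ≠ 0 := by positivity
  calc ((N : ℝ) - 0) ^ 3 * ((l * (l - 1 : ℕ) * (2 + l) ^ 2 + 2 * l) * ((1 + l) * x) ^ (l - 1)) /
        (12 * N ^ 2)
      = (l * (l - 1 : ℕ) * (2 + l) ^ 2 + 2 * l) * (1 + l) ^ (l - 1) / 12 * (x ^ (l - 1) * N) := by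
        rw [mul_pow]
        field_simp
        ring
    _ ≤ _ := by gcongr

theorem abs_integral_quadraticPow_sub_le {l : ℕ} (hl : 1 ≤ l) {x : ℝ} (hx : 1 ≤ x) :
    |(∫ t in (0 : ℝ)..⌊√x⌋₊, quadraticPow l x t) -
        (4 ^ l * (l ! : ℝ) ^ 2 / (2 * l + 1)! * x ^ (l + 1 / 2 : ℝ) - l / 2 * x ^ l)| ≤
      (l ^ 4 * (1 + l) ^ (l - 1) + 2 ^ l + l * 2 ^ l / 2) * (x ^ (l - 1) * √x) := by
  set N := ⌊√x⌋₊
  have hNs : (N : ℝ) ≤ √x := Nat.floor_le (sqrt_nonneg x)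
  have hsN : √x ≤ N + 1 := (Nat.lt_floor_add_one _).le
  rw [integral_quadraticPow_eq l hl (by linarith), add_sub_cancel_left]
  set IR := ∫ t in (0 : ℝ)..N,
    quadraticPow l x t - ((x - t ^ 2) ^ l - l ^ 2 * (t * (x - t ^ 2) ^ (l - 1)))
  set IT := ∫ t in (N : ℝ)..√x, (x - t ^ 2) ^ l
  have hR : |IR| ≤ l ^ 4 * (1 + l) ^ (l - 1) * (x ^ (l - 1) * √x) := by
    rw [← Real.norm_eq_abs]
    refine (norm_integral_le_of_norm_le_const (C := l ^ 4 * ((1 + l) * x) ^ (l - 1))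
      fun t ht => ?_).trans ?_
    · rw [Real.norm_eq_abs, Set.uIoc_of_le N.cast_nonneg] at *
      exact abs_quadraticPow_sub_le l hx ht.1.le (ht.2.trans hNs)
    · rw [sub_zero, abs_of_nonneg N.cast_nonneg, mul_pow]
      calc _ = l ^ 4 * (1 + l) ^ (l - 1) * (x ^ (l - 1) * N) := by ring
        _ ≤ _ := by gcongr
  have hT : |IT| ≤ 2 ^ l * (x ^ (l - 1) * √x) := by
    rw [← Real.norm_eq_abs]
    refine (norm_integral_le_of_norm_le_const (C := 2 ^ l * (x ^ (l - 1) * √x))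
      fun t ht => ?_).trans ?_
    · rw [Real.norm_eq_abs, Set.uIoc_of_le hNs] at *
      simpa using abs_sub_sq_sub_mul_pow_le hx (N.cast_nonneg.trans ht.1.le) ht.2
        (by linarith [ht.1]) le_rfl hl
    · rw [abs_of_nonneg (sub_nonneg.mpr hNs)]
      exact mul_le_of_le_one_right (by positivity) (by linarith)
  have hEnd : |(x - N ^ 2) ^ l| ≤ 2 ^ l * (x ^ (l - 1) * √x) := by
    simpa using abs_sub_sq_sub_mul_pow_le hx N.cast_nonneg hNs hsN le_rfl hl
  calc _ ≤ |IR| + |IT| + l / 2 * |(x - N ^ 2) ^ l| := by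
        refine (abs_add_le _ _).trans (add_le_add (abs_sub _ _) ?_)
        rw [abs_mul, abs_of_nonneg (by positivity)]
    _ ≤ _ := by
      have := mul_le_mul_of_nonneg_left hEnd (by positivity : (0 : ℝ) ≤ l / 2)
      linarith

theorem abs_sum_quadraticPow_sub_le {l : ℕ} (hl : 1 ≤ l) : ∃ C > 0, ∀ x : ℝ, 1 ≤ x →
    |∑ m ∈ Icc 1 ⌊√x⌋₊, quadraticPow l x m -
        (4 ^ l * (l ! : ℝ) ^ 2 / (2 * l + 1)! * x ^ (l + 1 / 2 : ℝ) - (l + 1) / 2 * x ^ l)| ≤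
      C * (x ^ (l - 1) * √x) := by
  refine ⟨(l * (l - 1 : ℕ) * (2 + l) ^ 2 + 2 * l) * (1 + l) ^ (l - 1) / 12 +
    (l ^ 4 * (1 + l) ^ (l - 1) + 2 ^ l + l * 2 ^ l / 2) + (2 + l) ^ l / 2, by positivity,
    fun x hx => ?_⟩
  set N := ⌊√x⌋₊
  have hNs : (N : ℝ) ≤ √x := Nat.floor_le (sqrt_nonneg x)
  have hTrap := abs_sum_quadraticPow_sub_trapezoid_le l hx
    (Nat.floor_pos.mpr (one_le_sqrt.mpr hx)) hNs
  have hInt := abs_integral_quadraticPow_sub_le hl hx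
  have hEnd : |quadraticPow l x N| ≤ (2 + l) ^ l * (x ^ (l - 1) * √x) :=
    abs_sub_sq_sub_mul_pow_le hx N.cast_nonneg hNs (Nat.lt_floor_add_one _).le l.cast_nonneg hl
  have hu0 : quadraticPow l x 0 = x ^ l := by simp [quadraticPow]
  rw [hu0] at hTrap
  set T := ∑ m ∈ Icc 1 N, quadraticPow l x m -
    ((∫ t in (0 : ℝ)..N, quadraticPow l x t) + (quadraticPow l x N - x ^ l) / 2)
  set I := (∫ t in (0 : ℝ)..N, quadraticPow l x t) -
    (4 ^ l * (l ! : ℝ) ^ 2 / (2 * l + 1)! * x ^ (l + 1 / 2 : ℝ) - l / 2 * x ^ l)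
  calc _ = |T + I + quadraticPow l x N / 2| := by congr 1; ring
    _ ≤ |T| + |I| + |quadraticPow l x N| / 2 := by
        rw [← abs_two, ← abs_div, abs_two]
        exact (abs_add_le _ _).trans (add_le_add_left (abs_add_le _ _) _)
    _ ≤ _ := by linarith

/-- `∑_{1 ≤ m ≤ √x} m^l (x/(2m) − m/2 − l/2)^l
      = ((l!)² 2^l/(2l+1)!) x^{l+1/2} − ((l+1)/2^{l+1}) x^l + O(x^{l−1/2})`. -/
theorem sum_m_power_l (l : ℕ) (hl : 1 ≤ l) :
    ∃ C x₀ : ℝ, 0 < C ∧ 1 ≤ x₀ ∧ ∀ x : ℝ, x₀ ≤ x →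
      |(∑ m ∈ Finset.Icc 1 ⌊Real.sqrt x⌋₊,
          (m : ℝ) ^ l * (x / (2 * m) - m / 2 - l / 2) ^ l) -
        (((l.factorial : ℝ) ^ 2 * 2 ^ l / ((2 * l + 1).factorial : ℝ)) *
            x ^ ((l : ℝ) + 1/2) - ((l + 1 : ℝ) / 2 ^ (l + 1)) * x ^ (l : ℕ))|
        ≤ C * x ^ ((l : ℝ) - 1/2) := by
  obtain ⟨C, hC, hbound⟩ := abs_sum_quadraticPow_sub_le hl
  refine ⟨C / 2 ^ l, 1, by positivity, le_rfl, fun x hx => ?_⟩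
  have hx0 : 0 < x := by linarith
  have hsummand : ∀ m ∈ Icc 1 ⌊√x⌋₊,
      (m : ℝ) ^ l * (x / (2 * m) - m / 2 - l / 2) ^ l = quadraticPow l x m / 2 ^ l := by
    intro m hm
    have hm0 : (m : ℝ) ≠ 0 := by have := (mem_Icc.mp hm).1; positivity
    rw [← mul_pow, quadraticPow, ← div_pow]
    congr 1
    field_simp
  have hmain : (l ! : ℝ) ^ 2 * 2 ^ l / (2 * l + 1)! * x ^ ((l : ℝ) + 1 / 2) -
      (l + 1 : ℝ) / 2 ^ (l + 1) * x ^ l =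
        (4 ^ l * (l ! : ℝ) ^ 2 / (2 * l + 1)! * x ^ (l + 1 / 2 : ℝ) - (l + 1) / 2 * x ^ l) /
          2 ^ l := by
    rw [show (4 : ℝ) ^ l = 2 ^ l * 2 ^ l by rw [← mul_pow]; norm_num]
    field_simp
    ring
  have hE : x ^ ((l : ℝ) - 1 / 2) = x ^ (l - 1) * √x := by
    rw [sqrt_eq_rpow, ← rpow_natCast, ← rpow_add hx0, Nat.cast_sub hl]
    congr 1
    ring
  rw [sum_congr rfl hsummand, ← sum_div, hmain, ← sub_div, abs_div,
    abs_of_pos (by positivity : (0 : ℝ) < 2 ^ l), hE, div_mul_eq_mul_div C]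
  exact div_le_div_of_nonneg_right (hbound x hx) (by positivity)
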